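/- arXiv:2411.03299 — 3 statements merged into one kernel-verified Lean document; each statement's English description precedes it below -/
import Mathlib

section
/- Let ε > 0 and 0 ≤ δ ≤ 1, and let p₀, p₁, φ₀, φ₁ ∈ [0,1] satisfy δφ_b - e^{-ε}δφ_{1-b} ≤ p_b - e^{-ε}p_{1-b} for both b ∈ {0,1}. Define ψ_b = (1/((1-δ)(e^ε - 1))) · (e^ε p_b - δ e^ε φ_b - p_{1-b} + δ φ_{1-b}) when δ < 1 (and ψ_b = φ_b when δ = 1). Then for δ < 1 and both b ∈ {0,1}: ψ_b ≥ 0, and δφ_b + (1-δ)·(e^ε/(1+e^ε))·ψ_b + (1-δ)·(1/(1+e^ε))·ψ_{1-b} = p_b. -/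
/-- The "pure-DP component" probability `ψ_b` built from the transcript probability
`pb`, the leakage component `φb`, and the corresponding quantities `pb'`, `φb'` of
the other index: `ψ_b = (e^ε p_b - δ e^ε φ_b - p_{1-b} + δ φ_{1-b}) / ((1-δ)(e^ε - 1))`. -/
noncomputable def psi (ε δ pb φb pb' φb' : ℝ) : ℝ :=
  (1 / ((1 - δ) * (Real.exp ε - 1))) *
    (Real.exp ε * pb - δ * Real.exp ε * φb - pb' + δ * φb')

open Real

/- Multiplying the hypothesis by `e^ε` turns it into the nonnegativity of the numerator of `ψ`. -/
theorem psi_nonneg {ε δ pb φb pb' φb' : ℝ} (hε : 0 < ε) (hδ : δ < 1)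
    (h : δ * φb - exp (-ε) * (δ * φb') ≤ pb - exp (-ε) * pb') :
    0 ≤ psi ε δ pb φb pb' φb' := by
  have hexp : 1 < exp ε := one_lt_exp_iff.mpr hε
  have hscale : ∀ x y : ℝ, exp ε * (x - exp (-ε) * y) = exp ε * x - y := fun x y => by
    rw [mul_sub, ← mul_assoc, ← exp_add, add_neg_cancel, exp_zero, one_mul]
  have hnum : 0 ≤ exp ε * pb - δ * exp ε * φb - pb' + δ * φb' := by
    have := mul_le_mul_of_nonneg_left h (exp_pos ε).le
    rw [hscale, hscale] at this
    linarith
  unfold psi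
  have : 0 < (1 - δ) * (exp ε - 1) := mul_pos (by linarith) (by linarith)
  positivity

theorem mixture_psi_eq {ε δ : ℝ} (pb φb pb' φb' : ℝ) (hε : ε ≠ 0) (hδ : δ ≠ 1) :
    δ * φb + (1 - δ) * (exp ε / (1 + exp ε)) * psi ε δ pb φb pb' φb'
      + (1 - δ) * (1 / (1 + exp ε)) * psi ε δ pb' φb' pb φb = pb := by
  have h1δ : 1 - δ ≠ 0 := sub_ne_zero.mpr hδ.symm
  have hexp : exp ε - 1 ≠ 0 := sub_ne_zero.mpr (mt (exp_eq_one_iff ε).mp hε)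
  have hexp' : 1 + exp ε ≠ 0 := by positivity
  unfold psi
  field_simp
  ring

theorem stmt15_general (ε δ p0 p1 φ0 φ1 : ℝ) (hε : 0 < ε) (hδ1 : δ < 1)
    (h0 : δ * φ0 - Real.exp (-ε) * (δ * φ1) ≤ p0 - Real.exp (-ε) * p1)
    (h1 : δ * φ1 - Real.exp (-ε) * (δ * φ0) ≤ p1 - Real.exp (-ε) * p0) :
    0 ≤ psi ε δ p0 φ0 p1 φ1 ∧ 0 ≤ psi ε δ p1 φ1 p0 φ0 ∧
    δ * φ0 + (1 - δ) * (Real.exp ε / (1 + Real.exp ε)) * psi ε δ p0 φ0 p1 φ1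
      + (1 - δ) * (1 / (1 + Real.exp ε)) * psi ε δ p1 φ1 p0 φ0 = p0 ∧
    δ * φ1 + (1 - δ) * (Real.exp ε / (1 + Real.exp ε)) * psi ε δ p1 φ1 p0 φ0
      + (1 - δ) * (1 / (1 + Real.exp ε)) * psi ε δ p0 φ0 p1 φ1 = p1 :=
  ⟨psi_nonneg hε hδ1 h0, psi_nonneg hε hδ1 h1,
    mixture_psi_eq p0 φ0 p1 φ1 hε.ne' hδ1.ne, mixture_psi_eq p1 φ1 p0 φ0 hε.ne' hδ1.ne⟩

/-- For `δ < 1`, the components `ψ_b` are nonnegative and the mixture with the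
randomized-response weights `δ`, `(1-δ)e^ε/(1+e^ε)`, `(1-δ)/(1+e^ε)` recovers
exactly the transcript probabilities `p_b`. -/
theorem stmt15 (ε δ p0 p1 φ0 φ1 : ℝ) (hε : 0 < ε) (hδ0 : 0 ≤ δ) (hδ1 : δ < 1)
    (hp0 : p0 ∈ Set.Icc (0:ℝ) 1) (hp1 : p1 ∈ Set.Icc (0:ℝ) 1)
    (hφ0 : φ0 ∈ Set.Icc (0:ℝ) 1) (hφ1 : φ1 ∈ Set.Icc (0:ℝ) 1)
    (h0 : δ * φ0 - Real.exp (-ε) * (δ * φ1) ≤ p0 - Real.exp (-ε) * p1)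
    (h1 : δ * φ1 - Real.exp (-ε) * (δ * φ0) ≤ p1 - Real.exp (-ε) * p0) :
    0 ≤ psi ε δ p0 φ0 p1 φ1 ∧ 0 ≤ psi ε δ p1 φ1 p0 φ0 ∧
    δ * φ0 + (1 - δ) * (Real.exp ε / (1 + Real.exp ε)) * psi ε δ p0 φ0 p1 φ1
      + (1 - δ) * (1 / (1 + Real.exp ε)) * psi ε δ p1 φ1 p0 φ0 = p0 ∧
    δ * φ1 + (1 - δ) * (Real.exp ε / (1 + Real.exp ε)) * psi ε δ p1 φ1 p0 φ0
      + (1 - δ) * (1 / (1 + Real.exp ε)) * psi ε δ p0 φ0 p1 φ1 = p1 :=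
  stmt15_general ε δ p0 p1 φ0 φ1 hε hδ1 h0 h1
end

section
/- Fix ε > 0 and δ ∈ (0,1]. Consider the continual mechanism M_δ with states {⊤,⊥}, initial state ⊤, binary inputs, defined by: in state ⊤, on any input b ∈ {0,1}, it transitions to state ⊥ and outputs ⊥ with probability δ, else remains in state ⊤ and outputs ⊤; in state ⊥, on input b, it outputs b with probability 1. Then M_δ is (0,δ)-DP against adversaries sending at most 2 pairs of binary inputs where the first and second coordinate sequences differ in at most one position: i.e., for any two input sequences of length ≤ 2 differing in at most one entry, the output distributions are (0,δ)-indistinguishable. -/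
/-- Answer alphabet `{⊤, ⊥, 0, 1}` of the mechanism `M_δ`:
`Sum.inl true = ⊤`, `Sum.inl false = ⊥`, `Sum.inr b = ` the echoed bit `b`. -/
abbrev MOut := Bool ⊕ Bool

/-- Output distribution of `M_δ` on a single binary input: starting in state `⊤`,
it outputs `⊥` (and moves to state `⊥`) with probability `δ`, else outputs `⊤`.
(The answer does not depend on the input bit.) -/
noncomputable def Mdist1 (δ : ℝ) (b1 : Bool) : MOut → ℝ :=
  fun o => if o = Sum.inl false then δ else if o = Sum.inl true then 1 - δ else 0

/-- Output distribution of `M_δ` on a length-2 input sequence `(b₁, b₂)`: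
the pair of answers is `(⊥, b₂)` with probability `δ`, `(⊤, ⊥)` with probability
`(1-δ)δ`, and `(⊤, ⊤)` with probability `(1-δ)²`. -/
noncomputable def Mdist2 (δ : ℝ) (b1 b2 : Bool) : MOut × MOut → ℝ :=
  fun o =>
    if o = (Sum.inl false, Sum.inr b2) then δ
    else if o = (Sum.inl true, Sum.inl false) then (1 - δ) * δ
    else if o = (Sum.inl true, Sum.inl true) then (1 - δ) * (1 - δ)
    else 0

lemma Mdist2_nonneg (δ : ℝ) (hδ0 : 0 ≤ δ) (hδ1 : δ ≤ 1) (b1 b2 : Bool) (o : MOut × MOut) :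
    0 ≤ Mdist2 δ b1 b2 o := by
  unfold Mdist2
  have h1 : (0:ℝ) ≤ 1 - δ := by linarith
  split_ifs <;> positivity

lemma key (δ : ℝ) (hδ0 : 0 ≤ δ) (hδ1 : δ ≤ 1) (b1 b1' c c' : Bool)
    (S : Finset (MOut × MOut)) :
    (∑ o ∈ S, Mdist2 δ b1 c o) ≤ (∑ o ∈ S, Mdist2 δ b1' c' o) + δ := by
  have hpt : ∀ o : MOut × MOut, Mdist2 δ b1 c o ≤ Mdist2 δ b1' c' o +
      (if o = (Sum.inl false, Sum.inr c) then δ else 0) := by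
    intro o
    by_cases h : o = (Sum.inl false, Sum.inr c)
    · have := Mdist2_nonneg δ hδ0 hδ1 b1' c' o
      simp only [h, if_pos rfl, Mdist2]
      simp only [Prod.mk.injEq, Sum.inl.injEq, Sum.inr.injEq, and_true, false_and, if_false,
        Bool.false_eq_true, and_false]
      split_ifs <;> linarith
    · rw [if_neg h, add_zero]
      unfold Mdist2
      rw [if_neg h]
      split_ifs <;> simp_all <;> linarith
  calc (∑ o ∈ S, Mdist2 δ b1 c o)
      ≤ ∑ o ∈ S, (Mdist2 δ b1' c' o + if o = (Sum.inl false, Sum.inr c) then δ else 0) :=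
        Finset.sum_le_sum (fun o _ => hpt o)
    _ = (∑ o ∈ S, Mdist2 δ b1' c' o) +
        ∑ o ∈ S, (if o = (Sum.inl false, Sum.inr c) then δ else 0) := Finset.sum_add_distrib
    _ ≤ (∑ o ∈ S, Mdist2 δ b1' c' o) + δ := by
        gcongr
        rw [Finset.sum_ite_eq' S (Sum.inl false, Sum.inr c) (fun _ => δ)]
        split_ifs <;> linarith

/-- `M_δ` is `(0,δ)`-DP against adversaries sending at most two pairs of binary
inputs whose two coordinate sequences differ in at most one position: for any two
input sequences of length `≤ 2` differing in at most one entry, the output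
distributions are `(0,δ)`-indistinguishable. -/
theorem stmt16 (ε δ : ℝ) (hε : 0 < ε) (hδ0 : 0 < δ) (hδ1 : δ ≤ 1)
    (b1 b2 b1' b2' : Bool) (hdiff : b1 = b1' ∨ b2 = b2') :
    (∀ S : Finset MOut,
      (∑ o ∈ S, Mdist1 δ b1 o) ≤ (∑ o ∈ S, Mdist1 δ b1' o) + δ ∧
      (∑ o ∈ S, Mdist1 δ b1' o) ≤ (∑ o ∈ S, Mdist1 δ b1 o) + δ) ∧
    (∀ S : Finset (MOut × MOut),
      (∑ o ∈ S, Mdist2 δ b1 b2 o) ≤ (∑ o ∈ S, Mdist2 δ b1' b2' o) + δ ∧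
      (∑ o ∈ S, Mdist2 δ b1' b2' o) ≤ (∑ o ∈ S, Mdist2 δ b1 b2 o) + δ) := by
  constructor
  · intro S
    have h : Mdist1 δ b1 = Mdist1 δ b1' := rfl
    rw [h]
    constructor <;> linarith [Finset.sum_nonneg (s := S) (f := Mdist1 δ b1')
      (fun o _ => by unfold Mdist1; split_ifs <;> linarith)]
  · intro S
    exact ⟨key δ hδ0.le hδ1 b1 b1' b2 b2' S, key δ hδ0.le hδ1 b1' b1 b2' b2 S⟩
end

section
/- Let δ₁, δ₂, … ∈ [0,1] be chosen adaptively (each δ_i may depend on previous outputs), subject to the constraint that at every point 1 - ∏_{j≤i}(1-δ_j) ≤ δ for a fixed δ ∈ [0,1]. Consider the process that at step i outputs a sample of RR_{0,δ_i}(b) for secret bit b ∈ {0,1}, where RR_{0,δ_i}(b) = (⊤, b) w.p. δ_i, (⊥, b) w.p. (1-δ_i)/2, (⊥, 1-b) w.p. (1-δ_i)/2. For any deterministic adaptive adversary, the total variation distance between the full output sequences under b = 0 and b = 1 is at most δ. -/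
/-- One step output probability of `RR_{0,d}(b)`: the output `(⊤, b)` has
probability `d`, and `(⊥, c)` has probability `(1-d)/2` for each bit `c`.
Outputs are pairs in `Bool × Bool` with the first component `true` meaning `⊤`. -/
noncomputable def stepProb (d : ℝ) (b : Bool) (o : Bool × Bool) : ℝ :=
  if o.1 then (if o.2 = b then d else 0) else (1 - d) / 2

/-- Probability, under secret bit `b`, that the deterministic adaptive adversary
`adv` (which maps each history of outputs to either `none` = halt or `some dᵢ` =
run `RR_{0,dᵢ}(b)` next) produces exactly the complete output sequence `l`. -/
noncomputable def transProb (adv : List (Bool × Bool) → Option ℝ) (b : Bool)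
    (l : List (Bool × Bool)) : ℝ :=
  (if adv l = none then 1 else 0) *
    ∏ i ∈ Finset.range l.length,
      ((adv (l.take i)).elim 0 fun d => stepProb d b (l.getD i (false, false)))

namespace Stmt18Aux

lemma stepProb_nonneg {d : ℝ} (h0 : 0 ≤ d) (h1 : d ≤ 1) (b : Bool) (o : Bool × Bool) :
    0 ≤ stepProb d b o := by
  unfold stepProb; split_ifs <;> linarith

lemma transProb_nonneg {adv : List (Bool × Bool) → Option ℝ}
    (hr : ∀ l d, adv l = some d → 0 ≤ d ∧ d ≤ 1) (b : Bool) (l : List (Bool × Bool)) :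
    0 ≤ transProb adv b l := by
  unfold transProb
  apply mul_nonneg
  · split <;> norm_num
  · apply Finset.prod_nonneg
    intro i _
    cases h : adv (l.take i) with
    | none => simp
    | some d =>
      obtain ⟨h0, h1⟩ := hr _ _ h
      simpa using stepProb_nonneg h0 h1 b _

lemma transProb_nil (adv : List (Bool × Bool) → Option ℝ) (b : Bool) :
    transProb adv b [] = if adv [] = none then 1 else 0 := by
  simp [transProb]

lemma transProb_cons (adv : List (Bool × Bool) → Option ℝ) (b : Bool)
    (o : Bool × Bool) (l : List (Bool × Bool)) :
    transProb adv b (o :: l) =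
      ((adv []).elim 0 fun d => stepProb d b o) *
        transProb (fun l' => adv (o :: l')) b l := by
  unfold transProb
  rw [List.length_cons, Finset.prod_range_succ']
  simp only [List.take_succ_cons, List.take_zero, List.getD_cons_succ, List.getD_cons_zero]
  ring

def lists : ℕ → Finset (List (Bool × Bool))
  | 0 => {[]}
  | (N + 1) => insert [] ((Finset.univ ×ˢ lists N).image fun p => p.1 :: p.2)

lemma mem_lists : ∀ (N : ℕ) (l : List (Bool × Bool)), l ∈ lists N ↔ l.length ≤ N
  | 0, l => by
    constructor
    · intro h; simp [lists] at h; simp [h]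
    · intro h; simp at h; simp [lists, h]
  | (N + 1), l => by
    cases l with
    | nil => simp [lists]
    | cons o l =>
      simp only [lists, Finset.mem_insert, Finset.mem_image, Finset.mem_product,
        Finset.mem_univ, true_and, List.length_cons]
      constructor
      · rintro (h | ⟨p, hp, hx⟩)
        · simp at h
        · injection hx with h1 h2
          subst h2
          simpa [Nat.succ_le_succ_iff] using (mem_lists N p.2).mp (by simpa using hp)
      · intro h
        right
        exact ⟨(o, l), by simpa using (mem_lists N l).mpr (Nat.succ_le_succ_iff.mp h), rfl⟩

lemma sum_lists_succ (N : ℕ) (F : List (Bool × Bool) → ℝ) :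
    ∑ l ∈ lists (N + 1), F l = F [] + ∑ o : Bool × Bool, ∑ l ∈ lists N, F (o :: l) := by
  rw [show lists (N+1) = insert [] ((Finset.univ ×ˢ lists N).image fun p => p.1 :: p.2) from rfl]
  rw [Finset.sum_insert (by simp)]
  congr 1
  rw [Finset.sum_image (by rintro ⟨a, x⟩ _ ⟨b, y⟩ _ h; simpa using h)]
  rw [Finset.sum_product]

lemma sum_stepProb (d : ℝ) (b : Bool) : ∑ o : Bool × Bool, stepProb d b o = 1 := by
  rw [Fintype.sum_prod_type]
  cases b <;> simp [stepProb, Fintype.sum_bool] <;> ring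

lemma sumA : ∀ (N : ℕ) (adv : List (Bool × Bool) → Option ℝ),
    (∀ l d, adv l = some d → 0 ≤ d ∧ d ≤ 1) → ∀ b : Bool,
    ∑ l ∈ lists N, transProb adv b l ≤ 1
  | 0, adv, hr, b => by
    simp only [lists, Finset.sum_singleton, transProb_nil]
    split <;> norm_num
  | (N + 1), adv, hr, b => by
    rw [sum_lists_succ]
    cases h : adv [] with
    | none =>
      have hz : ∀ o l, transProb adv b (o :: l) = 0 := by
        intro o l; rw [transProb_cons, h]; simp
      simp [hz, transProb_nil, h]
    | some d =>
      obtain ⟨hd0, hd1⟩ := hr [] d h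
      have h1 : transProb adv b [] = 0 := by simp [transProb_nil, h]
      rw [h1, zero_add]
      have key : ∀ o : Bool × Bool,
          ∑ l ∈ lists N, transProb adv b (o :: l) ≤ stepProb d b o := by
        intro o
        simp only [transProb_cons, h, Option.elim]
        rw [← Finset.mul_sum]
        calc stepProb d b o * ∑ l ∈ lists N, transProb (fun l' => adv (o :: l')) b l
            ≤ stepProb d b o * 1 :=
              mul_le_mul_of_nonneg_left
                (sumA N _ (fun l e he => hr _ _ he) b) (stepProb_nonneg hd0 hd1 b o)
          _ = stepProb d b o := mul_one _
      calc ∑ o : Bool × Bool, ∑ l ∈ lists N, transProb adv b (o :: l)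
          ≤ ∑ o : Bool × Bool, stepProb d b o := Finset.sum_le_sum fun o _ => key o
        _ = 1 := sum_stepProb d b

end Stmt18Aux

namespace Stmt18Aux

lemma filter_base {δ π : ℝ} (hπ : 0 ≤ π)
    {adv : List (Bool × Bool) → Option ℝ}
    (hr : ∀ l d, adv l = some d → 0 ≤ d ∧ d ≤ 1)
    (hf : ∀ l : List (Bool × Bool),
      1 - π * ∏ i ∈ Finset.range (l.length + 1), (1 - ((adv (l.take i)).getD 0)) ≤ δ) :
    0 ≤ δ - 1 + π := by
  have h := hf []
  simp only [List.length_nil, zero_add, Finset.prod_range_one, List.take_nil] at h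
  have hd : 0 ≤ (adv []).getD 0 := by
    cases h' : adv [] with
    | none => simp
    | some d => simpa using (hr [] d h').1
  nlinarith [mul_nonneg hπ hd]

lemma sumB (δ : ℝ) : ∀ (N : ℕ) (adv : List (Bool × Bool) → Option ℝ) (π : ℝ), 0 ≤ π →
    (∀ l d, adv l = some d → 0 ≤ d ∧ d ≤ 1) →
    (∀ l : List (Bool × Bool),
      1 - π * ∏ i ∈ Finset.range (l.length + 1), (1 - ((adv (l.take i)).getD 0)) ≤ δ) →
    ∀ b : Bool,
    π * ∑ l ∈ (lists N).filter (fun l => l.any Prod.fst = true), transProb adv b l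
      ≤ δ - 1 + π
  | 0, adv, π, hπ, hr, hf, b => by
    have h0 : 0 ≤ δ - 1 + π := filter_base hπ hr hf
    have he : (lists 0).filter (fun l => l.any Prod.fst = true) = ∅ := by
      rw [show lists 0 = {[]} from rfl]
      simp [Finset.filter_singleton]
    rw [he]
    simpa using h0
  | (N + 1), adv, π, hπ, hr, hf, b => by
    have h0 : 0 ≤ δ - 1 + π := filter_base hπ hr hf
    rw [Finset.sum_filter, sum_lists_succ]
    have hnil : (if ([] : List (Bool × Bool)).any Prod.fst = true
        then transProb adv b [] else 0) = 0 := by simp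
    rw [hnil, Fintype.sum_prod_type, Fintype.sum_bool]
    rw [Fintype.sum_bool, Fintype.sum_bool]
    cases h : adv [] with
    | none =>
      have hz : ∀ (o : Bool × Bool) l, transProb adv b (o :: l) = 0 := fun o l => by
        rw [transProb_cons, h]; simp
      simp only [hz, ite_self, Finset.sum_const_zero]
      simpa using h0
    | some d =>
      obtain ⟨hd0, hd1⟩ := hr [] d h
      have hchild : ∀ o : Bool × Bool, ∀ l : List (Bool × Bool),
          1 - (π * (1 - d)) * ∏ i ∈ Finset.range (l.length + 1),
            (1 - ((adv (o :: l.take i)).getD 0)) ≤ δ := by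
        intro o l
        have hc := hf (o :: l)
        rw [List.length_cons, Finset.prod_range_succ'] at hc
        simp only [List.take_succ_cons, List.take_zero, h, Option.getD_some] at hc
        calc 1 - (π * (1 - d)) * ∏ i ∈ Finset.range (l.length + 1),
              (1 - ((adv (o :: l.take i)).getD 0))
            = 1 - π * ((∏ i ∈ Finset.range (l.length + 1),
              (1 - ((adv (o :: l.take i)).getD 0))) * (1 - d)) := by ring
          _ ≤ δ := hc
      -- bound for the branches starting with a (true, c) output
      have hTtrue : ∀ c : Bool,
          ∑ l ∈ lists N, (if ((true, c) :: l).any Prod.fst = true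
              then transProb adv b ((true, c) :: l) else 0)
            ≤ stepProb d b (true, c) := by
        intro c
        have hif : ∀ l : List (Bool × Bool),
            (if ((true, c) :: l).any Prod.fst = true
              then transProb adv b ((true, c) :: l) else 0)
            = transProb adv b ((true, c) :: l) := by
          intro l; simp [List.any_cons]
        simp only [hif]
        simp only [transProb_cons, h, Option.elim]
        rw [← Finset.mul_sum]
        calc stepProb d b (true, c) *
              ∑ l ∈ lists N, transProb (fun l' => adv ((true, c) :: l')) b l
            ≤ stepProb d b (true, c) * 1 :=
              mul_le_mul_of_nonneg_left
                (sumA N _ (fun l e he => hr _ _ he) b) (stepProb_nonneg hd0 hd1 b _)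
          _ = stepProb d b (true, c) := mul_one _
      -- bound for the branches starting with a (false, c) output
      have hTfalse : ∀ c : Bool,
          π * ∑ l ∈ lists N, (if ((false, c) :: l).any Prod.fst = true
              then transProb adv b ((false, c) :: l) else 0)
            ≤ (1 / 2) * (δ - 1 + π * (1 - d)) := by
        intro c
        have hIH := sumB δ N (fun l' => adv ((false, c) :: l')) (π * (1 - d))
          (mul_nonneg hπ (by linarith)) (fun l e he => hr _ _ he) (hchild (false, c)) b
        rw [Finset.sum_filter] at hIH
        have hif : ∀ l : List (Bool × Bool),
            (if ((false, c) :: l).any Prod.fst = true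
              then transProb adv b ((false, c) :: l) else 0)
            = ((1 - d) / 2) * (if l.any Prod.fst = true
              then transProb (fun l' => adv ((false, c) :: l')) b l else 0) := by
          intro l
          rw [transProb_cons, h]
          by_cases hb : l.any Prod.fst = true <;>
            simp [List.any_cons, hb, stepProb]
        simp only [hif]
        rw [← Finset.mul_sum]
        set Ts := ∑ l ∈ lists N, (if l.any Prod.fst = true
          then transProb (fun l' => adv ((false, c) :: l')) b l else 0) with hTs
        calc π * ((1 - d) / 2 * Ts) = (1 / 2) * (π * (1 - d) * Ts) := by ring
          _ ≤ (1 / 2) * (δ - 1 + π * (1 - d)) := by linarith [hIH]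
      have hsum : stepProb d b (true, true) + stepProb d b (true, false) = d := by
        cases b <;> simp [stepProb]
      have e1 : π * ((∑ l ∈ lists N, (if ((true, true) :: l).any Prod.fst = true
            then transProb adv b ((true, true) :: l) else 0))
          + ∑ l ∈ lists N, (if ((true, false) :: l).any Prod.fst = true
            then transProb adv b ((true, false) :: l) else 0)) ≤ π * d :=
        mul_le_mul_of_nonneg_left
          (by linarith [hTtrue true, hTtrue false]) hπ
      have hf1 := hTfalse true
      have hf2 := hTfalse false
      nlinarith [e1, hf1, hf2]

end Stmt18Aux

namespace Stmt18Aux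

lemma transProb_eq_of_good (adv : List (Bool × Bool) → Option ℝ)
    {l : List (Bool × Bool)} (hg : ¬ l.any Prod.fst = true) :
    transProb adv true l = transProb adv false l := by
  unfold transProb
  congr 1
  apply Finset.prod_congr rfl
  intro i hi
  have hi' : i < l.length := Finset.mem_range.mp hi
  have hfst : (l.getD i (false, false)).1 = false := by
    rw [List.getD_eq_getElem l (false, false) hi']
    have hany : l.any Prod.fst = false := by simpa using hg
    have := List.any_eq_false.mp hany (l[i]) (List.getElem_mem hi')
    simpa using this
  cases adv (l.take i) with
  | none => rfl
  | some d => simp only [Option.elim, stepProb, hfst, Bool.false_eq_true, if_false]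

end Stmt18Aux


open Stmt18Aux in
/-- `(0,δ)`-filter composition of randomized response mechanisms: if at every
point the adaptively chosen parameters satisfy `1 - ∏ (1 - δⱼ) ≤ δ`, then the total
variation distance between the output sequences under secret bits `0` and `1` is at
most `δ` (expressed via every event `S`). -/
theorem stmt18 (δ : ℝ) (hδ0 : 0 ≤ δ) (hδ1 : δ ≤ 1)
    (adv : List (Bool × Bool) → Option ℝ)
    (hrange : ∀ l d, adv l = some d → 0 ≤ d ∧ d ≤ 1)
    (hfilt : ∀ l : List (Bool × Bool),
      1 - ∏ i ∈ Finset.range (l.length + 1), (1 - ((adv (l.take i)).getD 0)) ≤ δ) :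
    ∀ S : Set (List (Bool × Bool)),
      (∑' l : S, transProb adv true (l : List (Bool × Bool))) -
        (∑' l : S, transProb adv false (l : List (Bool × Bool))) ≤ δ := by
  intro S
  set badf : Bool → List (Bool × Bool) → ℝ :=
    fun b l => if l.any Prod.fst = true then transProb adv b l else 0 with hbadf
  have htp0 : ∀ (b : Bool) (l : List (Bool × Bool)), 0 ≤ transProb adv b l :=
    fun b l => transProb_nonneg hrange b l
  have hb0 : ∀ (b : Bool) (l : List (Bool × Bool)), 0 ≤ badf b l := by
    intro b l
    simp only [hbadf]
    split
    · exact htp0 b l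
    · exact le_rfl
  have hfilt' : ∀ l : List (Bool × Bool),
      1 - 1 * ∏ i ∈ Finset.range (l.length + 1), (1 - ((adv (l.take i)).getD 0)) ≤ δ := by
    intro l; rw [one_mul]; exact hfilt l
  have hsumle : ∀ (b : Bool) (u : Finset (List (Bool × Bool))),
      ∑ l ∈ u, badf b l ≤ δ := by
    intro b u
    have hsub : u ⊆ lists (u.sup List.length) := fun l hl =>
      (mem_lists _ l).mpr (Finset.le_sup hl)
    calc ∑ l ∈ u, badf b l
        ≤ ∑ l ∈ lists (u.sup List.length), badf b l :=
          Finset.sum_le_sum_of_subset_of_nonneg hsub fun l _ _ => hb0 b l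
      _ = ∑ l ∈ (lists (u.sup List.length)).filter
            (fun l => l.any Prod.fst = true), transProb adv b l :=
          (Finset.sum_filter _ _).symm
      _ ≤ δ := by
          have := sumB δ (u.sup List.length) adv 1 zero_le_one hrange hfilt' b
          simpa using this
  have hbsummable : ∀ b : Bool, Summable (badf b) := fun b =>
    summable_of_sum_le (hb0 b) (hsumle b)
  have hbtsum : ∀ b : Bool, ∑' l, badf b l ≤ δ := fun b =>
    Summable.tsum_le_of_sum_le (hbsummable b) (hsumle b)
  have hdiff : ∀ l : List (Bool × Bool),
      transProb adv true l - transProb adv false l ≤ badf true l := by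
    intro l
    by_cases hl : l.any Prod.fst = true
    · simp only [hbadf, if_pos hl]
      linarith [htp0 false l]
    · rw [transProb_eq_of_good adv hl]
      simp only [hbadf, if_neg hl]
      simp
  have hdom : ∀ l : List (Bool × Bool),
      transProb adv false l ≤ transProb adv true l + badf false l := by
    intro l
    by_cases hl : l.any Prod.fst = true
    · simp only [hbadf, if_pos hl]
      linarith [htp0 true l]
    · rw [transProb_eq_of_good adv hl]
      simp only [hbadf, if_neg hl]
      simp
  by_cases hsf : Summable (fun l : S => transProb adv true (l : List (Bool × Bool)))
  · have hsbad : ∀ b : Bool,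
        Summable (fun l : S => badf b (l : List (Bool × Bool))) := fun b =>
      (hbsummable b).subtype S
    have hsg : Summable (fun l : S => transProb adv false (l : List (Bool × Bool))) :=
      Summable.of_nonneg_of_le (fun l => htp0 false l)
        (fun l => hdom l) (hsf.add (hsbad false))
    rw [← Summable.tsum_sub hsf hsg]
    calc ∑' l : S, (transProb adv true (l : List (Bool × Bool)) -
            transProb adv false (l : List (Bool × Bool)))
        ≤ ∑' l : S, badf true (l : List (Bool × Bool)) :=
          Summable.tsum_le_tsum (fun l => hdiff l) (hsf.sub hsg) (hsbad true)
      _ = ∑' l, S.indicator (badf true) l := tsum_subtype S (badf true)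
      _ ≤ ∑' l, badf true l :=
          Summable.tsum_le_tsum (fun l => Set.indicator_le_self' (fun x _ => hb0 true x) l)
            ((hbsummable true).indicator S) (hbsummable true)
      _ ≤ δ := hbtsum true
  · rw [tsum_eq_zero_of_not_summable hsf]
    have hg0 : 0 ≤ ∑' l : S, transProb adv false (l : List (Bool × Bool)) :=
      tsum_nonneg fun l => htp0 false l
    linarith
end
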